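/- arXiv:1604.05060 — 7 statements merged into one kernel-verified Lean document; each statement's English description precedes it below -/
import Mathlib

section
/- Let p, q be unit quaternions and let Z = (U, V) be a pair of quaternions with Re(p⁻¹U) = 0 and Re(q⁻¹V) = 0. Then J(J(Z)) = −Z, where J(U,V) = (1/√3)·(2pq⁻¹V − U, −2qp⁻¹U + V); that is, J is an almost complex structure on S³×S³. -/
open Quaternion

noncomputable section

/-- Euclidean inner product on ℍ ≅ ℝ⁴: ⟨a,b⟩ = Re(a · conj b). -/
def innQ (a b : ℍ[ℝ]) : ℝ := (a * star b).re

/-- Euclidean product inner product on ℍ × ℍ. -/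
def innP (Z Z' : ℍ[ℝ] × ℍ[ℝ]) : ℝ := innQ Z.1 Z'.1 + innQ Z.2 Z'.2

/-- Tangency to S³ × S³ at (p,q). -/
def Tangent (p q : ℍ[ℝ]) (Z : ℍ[ℝ] × ℍ[ℝ]) : Prop :=
  (p⁻¹ * Z.1).re = 0 ∧ (q⁻¹ * Z.2).re = 0

/-- The almost complex structure J of the nearly Kähler S³×S³ at the point (p,q). -/
def Jmap (p q : ℍ[ℝ]) (Z : ℍ[ℝ] × ℍ[ℝ]) : ℍ[ℝ] × ℍ[ℝ] :=
  (Real.sqrt 3)⁻¹ •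
    ((2 * (p * q⁻¹ * Z.2) - Z.1, -(2 * (q * p⁻¹ * Z.1)) + Z.2) : ℍ[ℝ] × ℍ[ℝ])

/-- The nearly Kähler metric g at the point (p,q). -/
def gmet (p q : ℍ[ℝ]) (Z Z' : ℍ[ℝ] × ℍ[ℝ]) : ℝ :=
  (4/3) * (innQ Z.1 Z'.1 + innQ Z.2 Z'.2)
    - (2/3) * (innQ (p⁻¹ * Z.1) (q⁻¹ * Z'.2) + innQ (p⁻¹ * Z'.1) (q⁻¹ * Z.2))

/-- The almost product structure P at the point (p,q). -/
def Pmap (p q : ℍ[ℝ]) (Z : ℍ[ℝ] × ℍ[ℝ]) : ℍ[ℝ] × ℍ[ℝ] :=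
  (p * q⁻¹ * Z.2, q * p⁻¹ * Z.1)

/-- The usual product structure Q. -/
def Qmap (Z : ℍ[ℝ] × ℍ[ℝ]) : ℍ[ℝ] × ℍ[ℝ] := (-Z.1, Z.2)

/-- The quaternion units i, j, k. -/
def qi : ℍ[ℝ] := ⟨0, 1, 0, 0⟩
def qj : ℍ[ℝ] := ⟨0, 0, 1, 0⟩
def qk : ℍ[ℝ] := ⟨0, 0, 0, 1⟩

section Twist

variable {A : Type*} [Ring A]

/-- The matrix `!![-1, 2a; -2b, 1]` acting on `A × A`; `Jmap p q` is `(√3)⁻¹` times it,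
with `a = p q⁻¹` and `b = q p⁻¹`. -/
def twist (a b : A) (Z : A × A) : A × A :=
  (2 * (a * Z.2) - Z.1, -(2 * (b * Z.1)) + Z.2)

theorem twist_smul {k : Type*} [CommSemiring k] [Algebra k A] (a b : A) (c : k) (Z : A × A) :
    twist a b (c • Z) = c • twist a b Z := by
  simp only [twist, Prod.smul_fst, Prod.smul_snd, Prod.smul_mk, mul_smul_comm, smul_sub,
    smul_add, smul_neg]

theorem twist_twist {a b : A} (hab : a * b = 1) (hba : b * a = 1) (Z : A × A) :
    twist a b (twist a b Z) = -(3 • Z) := by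
  have h₁ : a * (b * Z.1) = Z.1 := by rw [← mul_assoc, hab, one_mul]
  have h₂ : b * (a * Z.2) = Z.2 := by rw [← mul_assoc, hba, one_mul]
  ext
  · simp only [twist, Prod.fst_neg, Prod.smul_fst]
    noncomm_ring
    rw [h₁]
    abel
  · simp only [twist, Prod.snd_neg, Prod.smul_snd]
    noncomm_ring
    rw [h₂]
    abel

theorem smul_twist_smul_twist {k : Type*} [CommRing k] [Algebra k A] {a b : A}
    (hab : a * b = 1) (hba : b * a = 1) {c : k} (hc : c * c * 3 = 1) (Z : A × A) :
    c • twist a b (c • twist a b Z) = -Z := by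
  rw [twist_smul, twist_twist hab hba, smul_smul, smul_neg, ← Nat.cast_smul_eq_nsmul k, smul_smul,
    Nat.cast_ofNat, hc, one_smul]

end Twist

theorem stmt_1_general (p q U V : ℍ[ℝ]) (hp : ‖p‖ = 1) (hq : ‖q‖ = 1) :
    Jmap p q (Jmap p q (U, V)) = -((U, V) : ℍ[ℝ] × ℍ[ℝ]) := by
  have hp0 : p ≠ 0 := norm_ne_zero_iff.mp (hp ▸ one_ne_zero)
  have hq0 : q ≠ 0 := norm_ne_zero_iff.mp (hq ▸ one_ne_zero)
  have hpq : p * q⁻¹ ≠ 0 := mul_ne_zero hp0 (inv_ne_zero hq0)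
  have hqp : q * p⁻¹ = (p * q⁻¹)⁻¹ := by rw [mul_inv_rev, inv_inv]
  have hc : (√3)⁻¹ * (√3)⁻¹ * 3 = (1 : ℝ) := by
    rw [← mul_inv, Real.mul_self_sqrt (by norm_num), inv_mul_cancel₀ (by norm_num)]
  change (√3)⁻¹ • twist (p * q⁻¹) (q * p⁻¹) ((√3)⁻¹ • twist (p * q⁻¹) (q * p⁻¹) (U, V)) = _
  rw [hqp]
  exact smul_twist_smul_twist (mul_inv_cancel₀ hpq) (inv_mul_cancel₀ hpq) hc _

/-- J ∘ J = -id on tangent vectors, so J is an almost complex structure. -/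
theorem stmt_1 (p q U V : ℍ[ℝ]) (hp : ‖p‖ = 1) (hq : ‖q‖ = 1)
    (hU : (p⁻¹ * U).re = 0) (hV : (q⁻¹ * V).re = 0) :
    Jmap p q (Jmap p q (U, V)) = -((U, V) : ℍ[ℝ] × ℍ[ℝ]) :=
  stmt_1_general p q U V hp hq
end
end

section
/- Let p, q be unit quaternions, and let Z = (U,V) and Z' = (U',V') be tangent vectors to S³×S³ at (p,q). Then (1/2)·(⟨Z,Z'⟩ + ⟨JZ, JZ'⟩) = (4/3)·(⟨U,U'⟩ + ⟨V,V'⟩) − (2/3)·(⟨p⁻¹U, q⁻¹V'⟩ + ⟨p⁻¹U', q⁻¹V⟩), where ⟨Z,Z'⟩ = ⟨U,U'⟩ + ⟨V,V'⟩ is the Euclidean product inner product. In other words, the Hermitian metric associated to the Euclidean product metric on S³×S³ is given by the explicit formula on the right-hand side. -/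
open Quaternion

noncomputable section

/-! Left multiplication by the unit quaternion `p q⁻¹` is an isometry of `ℍ` whose adjoint is left
multiplication by its conjugate `q p⁻¹`. Expanding `⟨JZ, JZ'⟩` bilinearly therefore gives
`(5/3) ⟨Z, Z'⟩ - (4/3) (⟨p⁻¹U, q⁻¹V'⟩ + ⟨p⁻¹U', q⁻¹V⟩)`, and averaging with `⟨Z, Z'⟩` yields `g`. -/

open scoped RealInnerProductSpace

namespace Quaternion

theorem inner_mul_left (a x y : ℍ) : ⟪a * x, y⟫ = ⟪x, star a * y⟫ := by
  simp [inner_def, re_mul]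
  ring

theorem inner_mul_right (a x y : ℍ) : ⟪x, a * y⟫ = ⟪star a * x, y⟫ := by
  rw [real_inner_comm, inner_mul_left, real_inner_comm]

theorem inner_mul_mul_left (a x y : ℍ) : ⟪a * x, a * y⟫ = normSq a * ⟪x, y⟫ := by
  rw [inner_mul_left, ← mul_assoc, star_mul_self, coe_mul_eq_smul, real_inner_smul_right]

theorem normSq_eq_one_of_norm_eq_one {a : ℍ} (ha : ‖a‖ = 1) : normSq a = 1 := by
  rw [normSq_eq_norm_mul_self, ha, one_mul]

theorem inv_eq_star_of_norm_eq_one {a : ℍ} (ha : ‖a‖ = 1) : a⁻¹ = star a := by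
  rw [inv_def, normSq_eq_one_of_norm_eq_one ha, inv_one, one_smul]

theorem inner_two_mul_sub_add_inner_neg_two_star_mul_add {w : ℍ} (hw : normSq w = 1)
    (U V U' V' : ℍ) :
    ⟪2 * (w * V) - U, 2 * (w * V') - U'⟫ + ⟪-(2 * (star w * U)) + V, -(2 * (star w * U')) + V'⟫
      = 5 * (⟪U, U'⟫ + ⟪V, V'⟫) - 4 * (⟪U, w * V'⟫ + ⟪U', w * V⟫) := by
  have h₁ : ⟪w * V, U'⟫ = ⟪U', w * V⟫ := real_inner_comm _ _
  have h₂ : ⟪star w * U, V'⟫ = ⟪U, w * V'⟫ := by rw [inner_mul_left, star_star]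
  have h₃ : ⟪V, star w * U'⟫ = ⟪U', w * V⟫ := by rw [inner_mul_right, star_star, real_inner_comm]
  simp only [two_mul, inner_add_left, inner_add_right, inner_sub_left, inner_sub_right,
    inner_neg_left, inner_neg_right, inner_mul_mul_left, normSq_star, hw, h₁, h₂, h₃]
  ring

end Quaternion

theorem innQ_eq_inner (a b : ℍ) : innQ a b = ⟪a, b⟫ := rfl

theorem innP_Jmap {p q : ℍ} (hp : ‖p‖ = 1) (hq : ‖q‖ = 1) (Z Z' : ℍ × ℍ) :
    innP (Jmap p q Z) (Jmap p q Z') = (5 / 3) * innP Z Z'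
      - (4 / 3) * (innQ (p⁻¹ * Z.1) (q⁻¹ * Z'.2) + innQ (p⁻¹ * Z'.1) (q⁻¹ * Z.2)) := by
  have hw : normSq (p * q⁻¹) = 1 := by
    rw [map_mul, map_inv₀, normSq_eq_one_of_norm_eq_one hp, normSq_eq_one_of_norm_eq_one hq,
      inv_one, one_mul]
  have hstar : q * p⁻¹ = star (p * q⁻¹) := by
    rw [star_mul, inv_eq_star_of_norm_eq_one hp, inv_eq_star_of_norm_eq_one hq, star_star]
  have hscale (x y : ℍ) : ⟪(√3)⁻¹ • x, (√3)⁻¹ • y⟫ = 1 / 3 * ⟪x, y⟫ := by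
    rw [real_inner_smul_left, real_inner_smul_right, ← mul_assoc, ← mul_inv,
      Real.mul_self_sqrt (by norm_num), one_div]
  have hmix (U V : ℍ) : ⟪U, p * q⁻¹ * V⟫ = ⟪p⁻¹ * U, q⁻¹ * V⟫ := by
    rw [mul_assoc, inner_mul_right, inv_eq_star_of_norm_eq_one hp]
  simp only [innP, Jmap, innQ_eq_inner, Prod.smul_fst, Prod.smul_snd, hscale, hstar]
  rw [← mul_add, inner_two_mul_sub_add_inner_neg_two_star_mul_add hw, hmix, hmix]
  ring

theorem stmt_2_general (p q : ℍ[ℝ]) (hp : ‖p‖ = 1) (hq : ‖q‖ = 1)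
    (Z Z' : ℍ[ℝ] × ℍ[ℝ]) :
    (1/2) * (innP Z Z' + innP (Jmap p q Z) (Jmap p q Z')) = gmet p q Z Z' := by
  rw [innP_Jmap hp hq, innP, gmet]
  ring

/-- the Hermitian metric associated to the Euclidean product metric
equals the explicit formula defining the nearly Kähler metric g. -/
theorem stmt_2 (p q : ℍ[ℝ]) (hp : ‖p‖ = 1) (hq : ‖q‖ = 1)
    (Z Z' : ℍ[ℝ] × ℍ[ℝ]) (hZ : Tangent p q Z) (hZ' : Tangent p q Z') :
    (1/2) * (innP Z Z' + innP (Jmap p q Z) (Jmap p q Z')) = gmet p q Z Z' :=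
  stmt_2_general p q hp hq Z Z'
end
end

section
/- Let a, b, c, p, q be unit quaternions and consider the map F : S³×S³ → S³×S³, F(p,q) = (apc⁻¹, bqc⁻¹), whose differential at (p,q) sends a tangent vector (U,V) to (aUc⁻¹, bVc⁻¹). Then F preserves the almost complex structure J: for every tangent vector Z = (U,V) at (p,q), one has J_{F(p,q)}(aUc⁻¹, bVc⁻¹) = (aU'c⁻¹, bV'c⁻¹) where (U',V') = J_{(p,q)}(U,V). In particular (aUc⁻¹, bVc⁻¹) is tangent to S³×S³ at (apc⁻¹, bqc⁻¹). -/
open Quaternion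

noncomputable section

/-! Under `F` the factors `c⁻¹ c` and `b⁻¹ b` cancel in `p q⁻¹ V`, which becomes `a (p q⁻¹ V) c⁻¹`
(symmetrically for `q p⁻¹ U`), so the `ℝ`-linear `J` commutes with `F`; and `p⁻¹ U` becomes its
conjugate `c (p⁻¹ U) c⁻¹`, which has the same real part since `Re (x y) = Re (y x)`. -/

theorem mul_mul_inv_mul_inv_mul_mul_mul_inv {G₀ : Type*} [GroupWithZero G₀] {b c : G₀}
    (hb : b ≠ 0) (hc : c ≠ 0) (a p q x : G₀) :
    a * p * c⁻¹ * (b * q * c⁻¹)⁻¹ * (b * x * c⁻¹) = a * (p * q⁻¹ * x) * c⁻¹ := by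
  simp only [mul_inv_rev, inv_inv, mul_assoc, inv_mul_cancel_left₀ hb, inv_mul_cancel_left₀ hc]

theorem mul_mul_inv_inv_mul_mul_mul_inv {G₀ : Type*} [GroupWithZero G₀] {a : G₀} (ha : a ≠ 0)
    (c p x : G₀) : (a * p * c⁻¹)⁻¹ * (a * x * c⁻¹) = c * (p⁻¹ * x) * c⁻¹ := by
  simp only [mul_inv_rev, inv_inv, mul_assoc, inv_mul_cancel_left₀ ha]

theorem Quaternion.re_mul_comm {R : Type*} [CommRing R] (x y : ℍ[R]) :
    (x * y).re = (y * x).re := by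
  simp only [Quaternion.re_mul]
  ring

theorem Quaternion.re_mul_mul_inv {R : Type*} [Field R] [LinearOrder R] [IsStrictOrderedRing R]
    {c : ℍ[R]} (hc : c ≠ 0) (x : ℍ[R]) : (c * x * c⁻¹).re = x.re := by
  rw [Quaternion.re_mul_comm, ← mul_assoc, inv_mul_cancel₀ hc, one_mul]

/-- The map `F(p, q) = (a p c⁻¹, b q c⁻¹)`; being linear, it is also its own differential. -/
def leftRightMul (a b c : ℍ[ℝ]) (Z : ℍ[ℝ] × ℍ[ℝ]) : ℍ[ℝ] × ℍ[ℝ] :=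
  (a * Z.1 * c⁻¹, b * Z.2 * c⁻¹)

theorem Jmap_leftRightMul {a b c : ℍ[ℝ]} (ha : a ≠ 0) (hb : b ≠ 0) (hc : c ≠ 0)
    (p q : ℍ[ℝ]) (Z : ℍ[ℝ] × ℍ[ℝ]) :
    Jmap (a * p * c⁻¹) (b * q * c⁻¹) (leftRightMul a b c Z)
      = leftRightMul a b c (Jmap p q Z) := by
  simp only [Jmap, leftRightMul, Prod.smul_mk, mul_smul_comm, smul_mul_assoc,
    mul_mul_inv_mul_inv_mul_mul_mul_inv hb hc, mul_mul_inv_mul_inv_mul_mul_mul_inv ha hc]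
  congr 2 <;> noncomm_ring

theorem tangent_leftRightMul {a b c p q : ℍ[ℝ]} {Z : ℍ[ℝ] × ℍ[ℝ]} (ha : a ≠ 0) (hb : b ≠ 0)
    (hc : c ≠ 0) (hZ : Tangent p q Z) :
    Tangent (a * p * c⁻¹) (b * q * c⁻¹) (leftRightMul a b c Z) := by
  unfold Tangent leftRightMul
  rw [mul_mul_inv_inv_mul_mul_mul_inv ha, mul_mul_inv_inv_mul_mul_mul_inv hb,
    Quaternion.re_mul_mul_inv hc, Quaternion.re_mul_mul_inv hc]
  exact hZ

theorem stmt_6_general (a b c p q U V : ℍ[ℝ])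
    (ha : ‖a‖ = 1) (hb : ‖b‖ = 1) (hc : ‖c‖ = 1)
    (hU : (p⁻¹ * U).re = 0) (hV : (q⁻¹ * V).re = 0) :
    Jmap (a * p * c⁻¹) (b * q * c⁻¹) (a * U * c⁻¹, b * V * c⁻¹)
      = (a * (Jmap p q (U, V)).1 * c⁻¹, b * (Jmap p q (U, V)).2 * c⁻¹) ∧
    Tangent (a * p * c⁻¹) (b * q * c⁻¹) (a * U * c⁻¹, b * V * c⁻¹) := by
  have ha₀ : a ≠ 0 := norm_ne_zero_iff.mp (by simp [ha])
  have hb₀ : b ≠ 0 := norm_ne_zero_iff.mp (by simp [hb])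
  have hc₀ : c ≠ 0 := norm_ne_zero_iff.mp (by simp [hc])
  exact ⟨Jmap_leftRightMul ha₀ hb₀ hc₀ p q (U, V),
    tangent_leftRightMul (Z := (U, V)) ha₀ hb₀ hc₀ ⟨hU, hV⟩⟩

/-- the isometry F(p,q) = (apc⁻¹, bqc⁻¹) preserves J, and its
differential maps tangent vectors to tangent vectors. -/
theorem stmt_6 (a b c p q U V : ℍ[ℝ])
    (ha : ‖a‖ = 1) (hb : ‖b‖ = 1) (hc : ‖c‖ = 1) (hp : ‖p‖ = 1) (hq : ‖q‖ = 1)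
    (hU : (p⁻¹ * U).re = 0) (hV : (q⁻¹ * V).re = 0) :
    Jmap (a * p * c⁻¹) (b * q * c⁻¹) (a * U * c⁻¹, b * V * c⁻¹)
      = (a * (Jmap p q (U, V)).1 * c⁻¹, b * (Jmap p q (U, V)).2 * c⁻¹) ∧
    Tangent (a * p * c⁻¹) (b * q * c⁻¹) (a * U * c⁻¹, b * V * c⁻¹) :=
  stmt_6_general a b c p q U V ha hb hc hU hV
end
end

section
/- Let p, q be unit quaternions and let Z = (U,V) be a tangent vector to S³×S³ at (p,q). Let Q(U,V) = (−U, V) be the usual product structure. Then Q(Z) = (1/√3)·(2·P(J(Z)) − J(Z)) and P(Z) = (1/2)·(Z − √3·Q(J(Z))), where J and P are evaluated at (p,q). -/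
open Quaternion

noncomputable section

/-! At every point the almost product structure `P` and the product structure `Q` are
involutions that anticommute, `P² = Q² = 1` and `PQ = -QP`, and `J = (1/√3)·Q(1 - 2P)`.
Hence `(2P - 1)J = (1/√3)·Q(-1 - 2P)(1 - 2P) = √3·Q` and `√3·QJ = 1 - 2P`. -/

section

variable {p q : ℍ[ℝ]}

lemma Pmap_Pmap (hp : p ≠ 0) (hq : q ≠ 0) (Z : ℍ[ℝ] × ℍ[ℝ]) : Pmap p q (Pmap p q Z) = Z := by
  ext <;> simp only [Pmap, ← mul_assoc] <;> simp [hp, hq]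

lemma Qmap_Qmap (Z : ℍ[ℝ] × ℍ[ℝ]) : Qmap (Qmap Z) = Z := by
  ext <;> simp [Qmap]

lemma Pmap_Qmap (Z : ℍ[ℝ] × ℍ[ℝ]) : Pmap p q (Qmap Z) = -Qmap (Pmap p q Z) := by
  ext <;> simp [Pmap, Qmap]

lemma Pmap_sub (Z W : ℍ[ℝ] × ℍ[ℝ]) : Pmap p q (Z - W) = Pmap p q Z - Pmap p q W := by
  ext <;> simp [Pmap, mul_sub]

lemma Pmap_smul (a : ℝ) (Z : ℍ[ℝ] × ℍ[ℝ]) : Pmap p q (a • Z) = a • Pmap p q Z := by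
  ext <;> simp [Pmap]

lemma Qmap_neg (Z : ℍ[ℝ] × ℍ[ℝ]) : Qmap (-Z) = -Qmap Z := by
  ext <;> simp [Qmap]

lemma Qmap_sub (Z W : ℍ[ℝ] × ℍ[ℝ]) : Qmap (Z - W) = Qmap Z - Qmap W := by
  ext <;> simp [Qmap, sub_eq_add_neg, add_comm]

lemma Qmap_smul (a : ℝ) (Z : ℍ[ℝ] × ℍ[ℝ]) : Qmap (a • Z) = a • Qmap Z := by
  ext <;> simp [Qmap]

lemma Jmap_eq_smul_Qmap (Z : ℍ[ℝ] × ℍ[ℝ]) :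
    Jmap p q Z = (√3)⁻¹ • Qmap (Z - (2 : ℝ) • Pmap p q Z) := by
  rw [Jmap]
  congr 1
  refine Prod.ext ?_ ?_ <;> simp only [Qmap, Pmap, Prod.fst_sub, Prod.snd_sub, Prod.smul_fst,
    Prod.smul_snd] <;> rw [two_mul, two_smul] <;> abel

end

theorem stmt_9_general (p q : ℍ[ℝ]) (hp : ‖p‖ = 1) (hq : ‖q‖ = 1)
    (Z : ℍ[ℝ] × ℍ[ℝ]) :
    Qmap Z = (Real.sqrt 3)⁻¹ • (2 • Pmap p q (Jmap p q Z) - Jmap p q Z) ∧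
    Pmap p q Z = (1/2 : ℝ) • (Z - Real.sqrt 3 • Qmap (Jmap p q Z)) := by
  have hp0 : p ≠ 0 := norm_ne_zero_iff.mp (by simp [hp])
  have hq0 : q ≠ 0 := norm_ne_zero_iff.mp (by simp [hq])
  have hs : 3 * (√3)⁻¹ ^ 2 = 1 := by rw [inv_pow, Real.sq_sqrt (by norm_num)]; norm_num
  have hs' : √3 * (√3)⁻¹ = 1 := mul_inv_cancel₀ (by positivity)
  have hJ := Jmap_eq_smul_Qmap (p := p) (q := q) Z
  have hPJ : Pmap p q (Jmap p q Z) = (√3)⁻¹ • Qmap ((2 : ℝ) • Z - Pmap p q Z) := by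
    rw [hJ, Pmap_smul, Pmap_Qmap, Pmap_sub, Pmap_smul, Pmap_Pmap hp0 hq0, ← Qmap_neg, neg_sub]
  have hQJ : Qmap (Jmap p q Z) = (√3)⁻¹ • (Z - (2 : ℝ) • Pmap p q Z) := by
    rw [hJ, Qmap_smul, Qmap_Qmap]
  constructor
  · rw [hPJ, hJ]
    simp only [Qmap_sub, Qmap_smul]
    linear_combination (norm := module) -(hs • Qmap Z)
  · rw [hQJ]
    linear_combination (norm := module) (1 / 2 : ℝ) • (hs' • (Z - (2 : ℝ) • Pmap p q Z))

/-- the relations Q = (1/√3)(2PJ − J) and P = (1/2)(id − √3 QJ). -/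
theorem stmt_9 (p q : ℍ[ℝ]) (hp : ‖p‖ = 1) (hq : ‖q‖ = 1)
    (Z : ℍ[ℝ] × ℍ[ℝ]) (hZ : Tangent p q Z) :
    Qmap Z = (Real.sqrt 3)⁻¹ • (2 • Pmap p q (Jmap p q Z) - Jmap p q Z) ∧
    Pmap p q Z = (1/2 : ℝ) • (Z - Real.sqrt 3 • Qmap (Jmap p q Z)) :=
  stmt_9_general p q hp hq Z
end
end

section
/- Let p, q be unit quaternions and let Z = (U,V) and Z' = (U',V') be tangent vectors to S³×S³ at (p,q). Then the Euclidean product metric and the nearly Kähler metric are related by ⟨Z, Z'⟩ = g(Z, Z') + (1/2)·g(Z, P(Z')), where ⟨Z,Z'⟩ = ⟨U,U'⟩ + ⟨V,V'⟩. -/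
open Quaternion

noncomputable section

/-! Left multiplication by a unit quaternion is an isometry of ℍ, so it is adjoint to its
inverse; with `q⁻¹ (q p⁻¹ U') = p⁻¹ U'` and `p⁻¹ (p q⁻¹ V') = q⁻¹ V'` this turns
`g(Z, P Z')` into the Euclidean products plus the mixed terms of `g(Z, Z')`, which then cancel. -/

lemma innQ_comm (a b : ℍ[ℝ]) : innQ a b = innQ b a := by
  simp only [innQ, re_mul, re_star, imI_star, imJ_star, imK_star]
  ring

lemma innQ_mul_right (a b c : ℍ[ℝ]) : innQ a (c * b) = innQ (star c * a) b := by
  simp only [innQ, star_mul, re_mul, imI_mul, imJ_mul, imK_mul, re_star, imI_star, imJ_star,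
    imK_star]
  ring

lemma star_eq_inv_of_norm_eq_one {c : ℍ[ℝ]} (hc : ‖c‖ = 1) : star c = c⁻¹ := by
  rw [inv_def, normSq_eq_norm_mul_self, hc, mul_one, inv_one, one_smul]

lemma innQ_mul_right_of_norm_eq_one {c : ℍ[ℝ]} (hc : ‖c‖ = 1) (a b : ℍ[ℝ]) :
    innQ a (c * b) = innQ (c⁻¹ * a) b := by
  rw [innQ_mul_right, star_eq_inv_of_norm_eq_one hc]

lemma innQ_mul_mul_left_of_norm_eq_one {c : ℍ[ℝ]} (hc : ‖c‖ = 1) (a b : ℍ[ℝ]) :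
    innQ (c * a) (c * b) = innQ a b := by
  have hc0 : c ≠ 0 := norm_ne_zero_iff.mp (hc ▸ one_ne_zero)
  rw [innQ_mul_right_of_norm_eq_one hc, inv_mul_cancel_left₀ hc0]

lemma gmet_Pmap_right {p q : ℍ[ℝ]} (hp : ‖p‖ = 1) (hq : ‖q‖ = 1) (Z Z' : ℍ[ℝ] × ℍ[ℝ]) :
    gmet p q Z (Pmap p q Z') =
      (4/3) * (innQ (p⁻¹ * Z.1) (q⁻¹ * Z'.2) + innQ (p⁻¹ * Z'.1) (q⁻¹ * Z.2))
        - (2/3) * innP Z Z' := by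
  have hp' : ‖p⁻¹‖ = 1 := by rw [norm_inv, hp, inv_one]
  have hq' : ‖q⁻¹‖ = 1 := by rw [norm_inv, hq, inv_one]
  have hp0 : p ≠ 0 := norm_ne_zero_iff.mp (hp ▸ one_ne_zero)
  have hq0 : q ≠ 0 := norm_ne_zero_iff.mp (hq ▸ one_ne_zero)
  have hU : innQ Z.1 (p * q⁻¹ * Z'.2) = innQ (p⁻¹ * Z.1) (q⁻¹ * Z'.2) := by
    rw [mul_assoc, innQ_mul_right_of_norm_eq_one hp]
  have hV : innQ Z.2 (q * p⁻¹ * Z'.1) = innQ (p⁻¹ * Z'.1) (q⁻¹ * Z.2) := by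
    rw [mul_assoc, innQ_mul_right_of_norm_eq_one hq, innQ_comm]
  have hUU : innQ (p⁻¹ * Z.1) (q⁻¹ * (q * p⁻¹ * Z'.1)) = innQ Z.1 Z'.1 := by
    rw [mul_assoc, inv_mul_cancel_left₀ hq0, innQ_mul_mul_left_of_norm_eq_one hp']
  have hVV : innQ (p⁻¹ * (p * q⁻¹ * Z'.2)) (q⁻¹ * Z.2) = innQ Z.2 Z'.2 := by
    rw [mul_assoc, inv_mul_cancel_left₀ hp0, innQ_mul_mul_left_of_norm_eq_one hq', innQ_comm]
  simp only [gmet, Pmap, innP]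
  rw [hU, hV, hUU, hVV]

theorem stmt_10_general (p q : ℍ[ℝ]) (hp : ‖p‖ = 1) (hq : ‖q‖ = 1)
    (Z Z' : ℍ[ℝ] × ℍ[ℝ]) :
    innP Z Z' = gmet p q Z Z' + (1/2) * gmet p q Z (Pmap p q Z') := by
  rw [gmet_Pmap_right hp hq]
  simp only [gmet, innP]
  ring

/-- the Euclidean product metric in terms of g and P. -/
theorem stmt_10 (p q : ℍ[ℝ]) (hp : ‖p‖ = 1) (hq : ‖q‖ = 1)
    (Z Z' : ℍ[ℝ] × ℍ[ℝ]) (hZ : Tangent p q Z) (hZ' : Tangent p q Z') :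
    innP Z Z' = gmet p q Z Z' + (1/2) * gmet p q Z (Pmap p q Z') :=
  stmt_10_general p q hp hq Z Z'
end
end

section
/- Let E be a finite-dimensional real inner product space, let J : E → E be a linear map with J∘J = −id and ⟨Jx, Jy⟩ = ⟨x, y⟩ for all x, y ∈ E, and let P : E → E be a linear map with P∘P = id, ⟨Px, y⟩ = ⟨x, Py⟩ for all x, y ∈ E, and P∘J = −J∘P. Let L be a subspace of E such that J maps L onto the orthogonal complement of L. Suppose A, B : L → L are linear maps such that P(x) = A(x) + J(B(x)) for all x ∈ L. Then A and B are symmetric (⟨Ax, y⟩ = ⟨x, Ay⟩ and ⟨Bx, y⟩ = ⟨x, By⟩ for all x, y ∈ L), A and B commute (A∘B = B∘A), and A∘A + B∘B = id on L. -/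
/-!
Pairing `P x = A x + J (B x)` with `y ∈ L` and with `J y ∈ Lᗮ` reads off `A` and `B`
(`⟪P x, y⟫ = ⟪A x, y⟫`, `⟪P x, J y⟫ = ⟪B x, y⟫`), so their symmetry is that of `P`, using that
`J` is skew. Expanding `P (P x) = x` with `P J = -J P` gives
`x = (A² + B²) x + J ((B A - A B) x)`, and since `E = L ⊕ J L` orthogonally both components
can be compared.
-/

open scoped RealInnerProductSpace

section OrthogonalImage

variable {E : Type*} [NormedAddCommGroup E] [InnerProductSpace ℝ E]
  {J : E →ₗ[ℝ] E} {L : Submodule ℝ E}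

theorem inner_apply_right_eq_neg_of_isometric (hJ2 : ∀ x, J (J x) = -x)
    (hJinner : ∀ x y, ⟪J x, J y⟫ = ⟪x, y⟫) (x y : E) : ⟪x, J y⟫ = -⟪J x, y⟫ := by
  rw [← hJinner, hJ2, inner_neg_right]

theorem inner_apply_eq_zero_of_map_eq_orthogonal (hL : L.map J = Lᗮ) {x y : E}
    (hx : x ∈ L) (hy : y ∈ L) : ⟪J x, y⟫ = 0 := by
  have hJx : J x ∈ Lᗮ := hL ▸ Submodule.mem_map_of_mem hx
  exact Submodule.inner_left_of_mem_orthogonal hy hJx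

theorem eq_zero_of_add_apply_eq_zero_of_map_eq_orthogonal (hL : L.map J = Lᗮ) {u v : E}
    (hu : u ∈ L) (hv : v ∈ L) (h : u + J v = 0) : u = 0 ∧ J v = 0 := by
  have hJv : J v ∈ Lᗮ := hL ▸ Submodule.mem_map_of_mem hv
  have hJvL : J v ∈ L := by
    rw [eq_neg_of_add_eq_zero_right h]
    exact L.neg_mem hu
  have hJv0 : J v = 0 := Submodule.disjoint_def.mp L.orthogonal_disjoint _ hJvL hJv
  exact ⟨by simpa [hJv0] using h, hJv0⟩

end OrthogonalImage

section Decomposition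

variable {E : Type*} [NormedAddCommGroup E] [InnerProductSpace ℝ E]
  {J P : E →ₗ[ℝ] E} {L : Submodule ℝ E} {A B : L →ₗ[ℝ] L}

theorem inner_apply_eq_inner_left_of_decomp (hL : L.map J = Lᗮ)
    (hAB : ∀ x : L, P (x : E) = (A x : E) + J (B x : E)) (x y : L) :
    ⟪P (x : E), (y : E)⟫ = ⟪(A x : E), (y : E)⟫ := by
  rw [hAB x, inner_add_left, inner_apply_eq_zero_of_map_eq_orthogonal hL (B x).2 y.2, add_zero]

theorem inner_apply_map_eq_inner_right_of_decomp (hJinner : ∀ x y, ⟪J x, J y⟫ = ⟪x, y⟫)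
    (hL : L.map J = Lᗮ) (hAB : ∀ x : L, P (x : E) = (A x : E) + J (B x : E)) (x y : L) :
    ⟪P (x : E), J (y : E)⟫ = ⟪(B x : E), (y : E)⟫ := by
  rw [hAB x, inner_add_left, real_inner_comm,
    inner_apply_eq_zero_of_map_eq_orthogonal hL y.2 (A x).2, hJinner, zero_add]

theorem inner_left_symm_of_decomp (hPsym : ∀ x y, ⟪P x, y⟫ = ⟪x, P y⟫) (hL : L.map J = Lᗮ)
    (hAB : ∀ x : L, P (x : E) = (A x : E) + J (B x : E)) (x y : L) :
    ⟪(A x : E), (y : E)⟫ = ⟪(x : E), (A y : E)⟫ := by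
  rw [← inner_apply_eq_inner_left_of_decomp hL hAB, hPsym, real_inner_comm,
    inner_apply_eq_inner_left_of_decomp hL hAB, real_inner_comm]

theorem inner_right_symm_of_decomp (hJ2 : ∀ x, J (J x) = -x)
    (hJinner : ∀ x y, ⟪J x, J y⟫ = ⟪x, y⟫) (hPsym : ∀ x y, ⟪P x, y⟫ = ⟪x, P y⟫)
    (hPJ : ∀ x, P (J x) = -J (P x)) (hL : L.map J = Lᗮ)
    (hAB : ∀ x : L, P (x : E) = (A x : E) + J (B x : E)) (x y : L) :
    ⟪(B x : E), (y : E)⟫ = ⟪(x : E), (B y : E)⟫ :=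
  calc ⟪(B x : E), (y : E)⟫
      = ⟪(x : E), P (J y)⟫ := by
        rw [← inner_apply_map_eq_inner_right_of_decomp hJinner hL hAB, hPsym]
    _ = ⟪J x, P y⟫ := by
        rw [hPJ, inner_neg_right, inner_apply_right_eq_neg_of_isometric hJ2 hJinner, neg_neg]
    _ = ⟪J x, J (B y : E)⟫ := by
        rw [hAB, inner_add_right, inner_apply_eq_zero_of_map_eq_orthogonal hL x.2 (A y).2,
          zero_add]
    _ = ⟪(x : E), (B y : E)⟫ := hJinner _ _

theorem apply_apply_eq_of_decomp (hJ2 : ∀ x, J (J x) = -x) (hPJ : ∀ x, P (J x) = -J (P x))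
    (hAB : ∀ x : L, P (x : E) = (A x : E) + J (B x : E)) (x : L) :
    P (P (x : E)) = ((A (A x) : E) + (B (B x) : E)) + J ((B (A x) : E) - (A (B x) : E)) := by
  rw [hAB x, map_add, hAB (A x), hPJ, hAB (B x), map_add, hJ2, map_sub]
  abel

theorem comm_and_sq_add_sq_eq_id_of_decomp (hJ2 : ∀ x, J (J x) = -x)
    (hP2 : ∀ x, P (P x) = x) (hPJ : ∀ x, P (J x) = -J (P x)) (hL : L.map J = Lᗮ)
    (hAB : ∀ x : L, P (x : E) = (A x : E) + J (B x : E)) :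
    A ∘ₗ B = B ∘ₗ A ∧ A ∘ₗ A + B ∘ₗ B = LinearMap.id := by
  have hJ_inj : Function.Injective J :=
    Function.LeftInverse.injective (g := fun y => -J y) fun x => by simp [hJ2]
  have hsplit (x : L) := eq_zero_of_add_apply_eq_zero_of_map_eq_orthogonal hL
    (L.sub_mem (L.add_mem (A (A x)).2 (B (B x)).2) x.2) (L.sub_mem (B (A x)).2 (A (B x)).2)
    (by rw [← add_sub_right_comm, ← apply_apply_eq_of_decomp hJ2 hPJ hAB, hP2, sub_self])
  refine ⟨LinearMap.ext fun x => ?_, LinearMap.ext fun x => ?_⟩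
  · exact Subtype.ext (sub_eq_zero.mp (hJ_inj ((hsplit x).2.trans J.map_zero.symm))).symm
  · exact Subtype.ext (sub_eq_zero.mp (hsplit x).1)

end Decomposition

theorem stmt_12_general {E : Type*} [NormedAddCommGroup E] [InnerProductSpace ℝ E]
    (J P : E →ₗ[ℝ] E)
    (hJ2 : ∀ x, J (J x) = -x)
    (hJinner : ∀ x y, ⟪J x, J y⟫ = ⟪x, y⟫)
    (hP2 : ∀ x, P (P x) = x)
    (hPsym : ∀ x y, ⟪P x, y⟫ = ⟪x, P y⟫)
    (hPJ : ∀ x, P (J x) = -J (P x))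
    (L : Submodule ℝ E)
    (hL : L.map J = Lᗮ)
    (A B : L →ₗ[ℝ] L)
    (hAB : ∀ x : L, P (x : E) = (A x : E) + J (B x : E)) :
    (∀ x y : L, ⟪(A x : E), (y : E)⟫ = ⟪(x : E), (A y : E)⟫) ∧
    (∀ x y : L, ⟪(B x : E), (y : E)⟫ = ⟪(x : E), (B y : E)⟫) ∧
    A ∘ₗ B = B ∘ₗ A ∧
    A ∘ₗ A + B ∘ₗ B = LinearMap.id :=
  ⟨inner_left_symm_of_decomp hPsym hL hAB,
    inner_right_symm_of_decomp hJ2 hJinner hPsym hPJ hL hAB,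
    comm_and_sq_add_sq_eq_id_of_decomp hJ2 hP2 hPJ hL hAB⟩

/-- pointwise linear algebra of the decomposition P|_L = A + J∘B along a
Lagrangian subspace L: A and B are symmetric, commute, and A² + B² = id. -/
theorem stmt_12 {E : Type*} [NormedAddCommGroup E] [InnerProductSpace ℝ E]
    [FiniteDimensional ℝ E]
    (J P : E →ₗ[ℝ] E)
    (hJ2 : ∀ x, J (J x) = -x)
    (hJinner : ∀ x y, ⟪J x, J y⟫ = ⟪x, y⟫)
    (hP2 : ∀ x, P (P x) = x)
    (hPsym : ∀ x y, ⟪P x, y⟫ = ⟪x, P y⟫)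
    (hPJ : ∀ x, P (J x) = -J (P x))
    (L : Submodule ℝ E)
    (hL : L.map J = Lᗮ)
    (A B : L →ₗ[ℝ] L)
    (hAB : ∀ x : L, P (x : E) = (A x : E) + J (B x : E)) :
    (∀ x y : L, ⟪(A x : E), (y : E)⟫ = ⟪(x : E), (A y : E)⟫) ∧
    (∀ x y : L, ⟪(B x : E), (y : E)⟫ = ⟪(x : E), (B y : E)⟫) ∧
    A ∘ₗ B = B ∘ₗ A ∧
    A ∘ₗ A + B ∘ₗ B = LinearMap.id :=
  stmt_12_general J P hJ2 hJinner hP2 hPsym hPJ L hL A B hAB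
end

section
/- Let u be a unit quaternion and let i, j, k denote the imaginary quaternionic units. Consider the immersion f : S³ → S³×S³, f(u) = (u, u·i), whose tangent image at the point (u, u·i) consists of the vectors Z_a = (u·a, u·a·i) for imaginary quaternions a. Then: (i) for all imaginary quaternions a, b, g(Z_a, J(Z_b)) = 0, i.e. the immersion is Lagrangian; (ii) P(Z_i) = Z_i, P(Z_j) = −Z_j, and P(Z_k) = −Z_k; that is, the angle functions of this Lagrangian immersion are (2θ₁, 2θ₂, 2θ₃) = (0, π, π). Here J, g, and P are evaluated at the point (u, u·i). -/
open Quaternion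

noncomputable section

/-! Left multiplication by a unit quaternion `u`, acting diagonally on `S³ × S³`, is an isometry
of `g` commuting with `J` and `P`; it maps the point `(1, i)` to `(u, u i)` and `(a, a i)` to `Z_a`.
So everything reduces to the point `(1, i)`, where `g(Z_a, J Z_b) = 0` is a direct computation and
`P (a, a i) = (i⁻¹ a i, i⁻¹ a i · i)`: conjugation by `i` fixes `i` and negates `j` and `k`. -/

lemma innQ_mul_left (u x y : ℍ[ℝ]) : innQ (u * x) (u * y) = normSq u * innQ x y := by
  simp only [innQ, re_mul, re_star, imI_star, imJ_star, imK_star, imI_mul, imJ_mul, imK_mul,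
    normSq_def']
  ring

lemma innQ_smul_left (r : ℝ) (x y : ℍ[ℝ]) : innQ (r • x) y = r * innQ x y := by
  simp [innQ]

lemma innQ_smul_right (r : ℝ) (x y : ℍ[ℝ]) : innQ x (r • y) = r * innQ x y := by
  simp [innQ]

lemma gmet_smul_right (p q : ℍ[ℝ]) (Z W : ℍ[ℝ] × ℍ[ℝ]) (r : ℝ) :
    gmet p q Z (r • W) = r * gmet p q Z W := by
  simp only [gmet, Prod.smul_fst, Prod.smul_snd, mul_smul_comm, innQ_smul_left, innQ_smul_right]
  ring

section LeftTranslation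

variable {u : ℍ[ℝ]}

lemma inv_mul_mul_cancel_left (hu : u ≠ 0) (p x : ℍ[ℝ]) : (u * p)⁻¹ * (u * x) = p⁻¹ * x := by
  rw [mul_inv_rev, mul_assoc, inv_mul_cancel_left₀ hu]

lemma mul_mul_inv_mul_left (hu : u ≠ 0) (p q x : ℍ[ℝ]) :
    u * p * (u * q)⁻¹ * (u * x) = u * (p * q⁻¹ * x) := by
  rw [mul_assoc _ _ (u * x), inv_mul_mul_cancel_left hu]
  simp only [mul_assoc]

lemma Jmap_mul_left (hu : u ≠ 0) (p q : ℍ[ℝ]) (Z : ℍ[ℝ] × ℍ[ℝ]) :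
    Jmap (u * p) (u * q) (u • Z) = u • Jmap p q Z := by
  ext <;> simp only [Jmap, Prod.smul_fst, Prod.smul_snd, smul_eq_mul, mul_mul_inv_mul_left hu,
    mul_smul_comm, mul_sub, mul_add, mul_neg] <;> noncomm_ring

lemma Pmap_mul_left (hu : u ≠ 0) (p q : ℍ[ℝ]) (Z : ℍ[ℝ] × ℍ[ℝ]) :
    Pmap (u * p) (u * q) (u • Z) = u • Pmap p q Z := by
  simp only [Pmap, Prod.smul_fst, Prod.smul_snd, Prod.smul_mk, smul_eq_mul, mul_mul_inv_mul_left hu]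

lemma gmet_mul_left (hu : ‖u‖ = 1) (p q : ℍ[ℝ]) (Z Z' : ℍ[ℝ] × ℍ[ℝ]) :
    gmet (u * p) (u * q) (u • Z) (u • Z') = gmet p q Z Z' := by
  have hu0 : u ≠ 0 := ne_zero_of_norm_ne_zero (hu ▸ one_ne_zero)
  have hn : normSq u = 1 := by rw [normSq_eq_norm_mul_self, hu, mul_one]
  simp only [gmet, Prod.smul_fst, Prod.smul_snd, smul_eq_mul, inv_mul_mul_cancel_left hu0,
    innQ_mul_left, hn, one_mul]

end LeftTranslation

lemma qi_mul_qi : qi * qi = -1 := by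
  ext <;> simp [re_mul, imI_mul, imJ_mul, imK_mul] <;> simp [qi]

lemma qi_inv : qi⁻¹ = -qi :=
  inv_eq_of_mul_eq_one_right (by rw [mul_neg, qi_mul_qi, neg_neg])

lemma gmet_Jmap_one_qi {a b : ℍ[ℝ]} (ha : a.re = 0) (hb : b.re = 0) :
    gmet 1 qi (a, a * qi) (Jmap 1 qi (b, b * qi)) = 0 := by
  rw [Jmap, gmet_smul_right]
  refine mul_eq_zero_of_right _ ?_
  simp only [gmet, qi_inv, inv_one, one_mul, mul_one, innQ, two_mul, ha, hb, re_mul, re_star,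
    imI_star, imJ_star, imK_star, imI_mul, imJ_mul, imK_mul, re_add, imI_add, imJ_add, imK_add,
    re_sub, imI_sub, imJ_sub, imK_sub, re_neg, imI_neg, imJ_neg, imK_neg]
  simp only [qi]
  ring

lemma qi_inv_mul_qi_mul_qi : qi⁻¹ * qi * qi = qi := by
  simp only [qi_inv, neg_mul, qi_mul_qi, neg_neg, one_mul]

lemma qi_inv_mul_qj_mul_qi : qi⁻¹ * qj * qi = -qj := by
  ext <;> simp [qi_inv, re_mul, imI_mul, imJ_mul, imK_mul] <;> simp [qi, qj]

lemma qi_inv_mul_qk_mul_qi : qi⁻¹ * qk * qi = -qk := by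
  ext <;> simp [qi_inv, re_mul, imI_mul, imJ_mul, imK_mul] <;> simp [qi, qk]

lemma Pmap_one_qi (a : ℍ[ℝ]) : Pmap 1 qi (a, a * qi) = (qi⁻¹ * a * qi, qi⁻¹ * a * qi * qi) := by
  simp only [Pmap, one_mul, inv_one, mul_one, mul_assoc _ qi qi, qi_mul_qi, qi_inv]
  noncomm_ring

/-- the immersion u ↦ (u, u·i) is Lagrangian with angle functions
(2θ₁, 2θ₂, 2θ₃) = (0, π, π). -/
theorem stmt_16 (u : ℍ[ℝ]) (hu : ‖u‖ = 1) :
    (∀ a b : ℍ[ℝ], a.re = 0 → b.re = 0 →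
      gmet u (u * qi) (u * a, u * a * qi) (Jmap u (u * qi) (u * b, u * b * qi)) = 0) ∧
    Pmap u (u * qi) (u * qi, u * qi * qi) = (u * qi, u * qi * qi) ∧
    Pmap u (u * qi) (u * qj, u * qj * qi) = -((u * qj, u * qj * qi) : ℍ[ℝ] × ℍ[ℝ]) ∧
    Pmap u (u * qi) (u * qk, u * qk * qi) = -((u * qk, u * qk * qi) : ℍ[ℝ] × ℍ[ℝ]) := by
  have hu0 : u ≠ 0 := ne_zero_of_norm_ne_zero (hu ▸ one_ne_zero)
  have tangent_eq (a : ℍ[ℝ]) : ((u * a, u * a * qi) : ℍ[ℝ] × ℍ[ℝ]) = u • (a, a * qi) := by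
    rw [Prod.smul_mk, smul_eq_mul, smul_eq_mul, mul_assoc]
  have Pmap_tangent (a : ℍ[ℝ]) :
      Pmap u (u * qi) (u * a, u * a * qi) = u • (qi⁻¹ * a * qi, qi⁻¹ * a * qi * qi) := by
    rw [tangent_eq, ← Pmap_one_qi, ← Pmap_mul_left hu0, mul_one]
  refine ⟨fun a b ha hb => ?_, ?_, ?_, ?_⟩
  · have h := gmet_mul_left hu 1 qi (a, a * qi) (Jmap 1 qi (b, b * qi))
    rw [← Jmap_mul_left hu0, mul_one] at h
    rw [tangent_eq, tangent_eq, h, gmet_Jmap_one_qi ha hb]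
  · rw [Pmap_tangent, qi_inv_mul_qi_mul_qi, tangent_eq]
  · rw [Pmap_tangent, qi_inv_mul_qj_mul_qi, tangent_eq, ← smul_neg, Prod.neg_mk, neg_mul]
  · rw [Pmap_tangent, qi_inv_mul_qk_mul_qi, tangent_eq, ← smul_neg, Prod.neg_mk, neg_mul]
end
end
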